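/- Let α, β ∈ ℂ with α ≠ β, and let γ : [0,1] → ℂ, γ(t) = α + t(β − α) be the segment from α to β. Let f : ℂ → ℂ be entire with f'(z) ≠ 0 for all z with f(z) ∈ γ([0,1]). If z₁ ≠ z₂ satisfy f(z₁) = f(z₂) = α, and γ₁, γ₂ : [0,1] → ℂ are continuous lifts through f (f ∘ γᵢ = γ, γᵢ(0) = zᵢ), then γ₁([0,1]) ∩ γ₂([0,1]) = ∅. -/

import Mathlib

/-!
Two lifts of the same path through `f` that meet at some time `s` agree at all times: the set of
times where they agree is closed, and it is open because `f` is injective near every point lying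
over the segment (inverse function theorem). By connectedness of `[0, 1]` the lifts then agree at
`0`, contradicting `z₁ ≠ z₂`. That two lifts can only meet at equal times follows from the
injectivity of the segment's parametrisation.
-/

open Set Topology

theorem HasStrictDerivAt.exists_mem_nhds_injOn {𝕜 : Type*} [NontriviallyNormedField 𝕜]
    [CompleteSpace 𝕜] {f : 𝕜 → 𝕜} {f' a : 𝕜} (hf : HasStrictDerivAt f f' a) (hf' : f' ≠ 0) :
    ∃ U ∈ 𝓝 a, InjOn f U :=
  ⟨_, hf.eventually_left_inverse hf', fun _ hx _ hy hxy => hx.symm.trans ((congrArg _ hxy).trans hy)⟩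

theorem isLocallyInjective_domRestrict_of_forall_mem_nhds_injOn {E X : Type*} [TopologicalSpace E]
    {p : E → X} {T : Set E} (hT : ∀ e ∈ T, ∃ U ∈ 𝓝 e, InjOn p U) :
    IsLocallyInjective (T.domRestrict p) :=
  isLocallyInjective_iff_nhds.mpr fun e => by
    obtain ⟨U, hU, hinj⟩ := hT e e.2
    exact ⟨_, continuous_subtype_val.continuousAt.preimage_mem_nhds hU,
      fun x hx y hy hxy => Subtype.val_injective (hinj hx hy hxy)⟩

theorem eqOn_of_comp_eqOn_of_forall_mem_nhds_injOn {A E X : Type*} [TopologicalSpace A]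
    [TopologicalSpace E] [T2Space E] {p : E → X} {T : Set E}
    (hT : ∀ e ∈ T, ∃ U ∈ 𝓝 e, InjOn p U) {s : Set A} (hs : IsPreconnected s) {g₁ g₂ : A → E}
    (h₁ : ContinuousOn g₁ s) (h₂ : ContinuousOn g₂ s) (hT₁ : MapsTo g₁ s T) (hT₂ : MapsTo g₂ s T)
    (he : EqOn (p ∘ g₁) (p ∘ g₂) s) {a : A} (has : a ∈ s) (ha : g₁ a = g₂ a) : EqOn g₁ g₂ s := by
  have := isPreconnected_iff_preconnectedSpace.mp hs
  have key := (T2Space.isSeparatedMap (T.domRestrict p)).eq_of_comp_eq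
    (isLocallyInjective_domRestrict_of_forall_mem_nhds_injOn hT)
    (h₁.domRestrict.subtype_mk fun x => hT₁ x.2) (h₂.domRestrict.subtype_mk fun x => hT₂ x.2)
    (funext fun x => he x.2) ⟨a, has⟩ (Subtype.ext ha)
  exact fun x hx => congrArg Subtype.val (congrFun key ⟨x, hx⟩)

theorem Complex.add_ofReal_mul_sub_injective {α β : ℂ} (hab : α ≠ β) :
    Function.Injective fun t : ℝ => α + (t : ℂ) * (β - α) := fun s t hst => by
  have := mul_right_cancel₀ (sub_ne_zero.mpr hab.symm) (add_left_cancel hst)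
  exact_mod_cast this

theorem segment_lifts_disjoint_general (α β : ℂ) (hab : α ≠ β)
    (f : ℂ → ℂ) (hf : Differentiable ℂ f)
    (hcrit : ∀ z : ℂ, f z ∈ (fun t : ℝ => α + (t : ℂ) * (β - α)) '' Set.Icc (0:ℝ) 1 →
      deriv f z ≠ 0)
    (z₁ z₂ : ℂ) (hz : z₁ ≠ z₂)
    (γ₁ γ₂ : ℝ → ℂ)
    (hγ₁c : ContinuousOn γ₁ (Set.Icc 0 1)) (hγ₂c : ContinuousOn γ₂ (Set.Icc 0 1))
    (hlift₁ : ∀ t ∈ Set.Icc (0:ℝ) 1, f (γ₁ t) = α + (t : ℂ) * (β - α))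
    (hlift₂ : ∀ t ∈ Set.Icc (0:ℝ) 1, f (γ₂ t) = α + (t : ℂ) * (β - α))
    (h0₁ : γ₁ 0 = z₁) (h0₂ : γ₂ 0 = z₂) :
    (γ₁ '' Set.Icc (0:ℝ) 1) ∩ (γ₂ '' Set.Icc (0:ℝ) 1) = ∅ := by
  refine eq_empty_iff_forall_notMem.mpr ?_
  rintro _ ⟨⟨s, hs, rfl⟩, t, ht, hts⟩
  have hst : t = s := Complex.add_ofReal_mul_sub_injective hab <| by
    simp only [← hlift₁ s hs, ← hlift₂ t ht, hts]
  subst hst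
  have hinj : ∀ z ∈ f ⁻¹' ((fun t : ℝ => α + (t : ℂ) * (β - α)) '' Icc 0 1),
      ∃ U ∈ 𝓝 z, InjOn f U := fun z hzT =>
    ((hf.analyticAt z).hasStrictDerivAt).exists_mem_nhds_injOn (hcrit z hzT)
  have heq : EqOn γ₁ γ₂ (Icc 0 1) :=
    eqOn_of_comp_eqOn_of_forall_mem_nhds_injOn hinj isPreconnected_Icc hγ₁c hγ₂c
      (fun u hu => ⟨u, hu, (hlift₁ u hu).symm⟩) (fun u hu => ⟨u, hu, (hlift₂ u hu).symm⟩)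
      (fun u hu => (hlift₁ u hu).trans (hlift₂ u hu).symm) hs hts.symm
  exact hz (h0₁ ▸ h0₂ ▸ heq (left_mem_Icc.mpr zero_le_one))

/-- Lifts through `f` of the segment from `α` to `β`, starting at two distinct
preimages of `α`, have disjoint images when `f` has no critical points over
the segment. -/
theorem segment_lifts_disjoint (α β : ℂ) (hab : α ≠ β)
    (f : ℂ → ℂ) (hf : Differentiable ℂ f)
    (hcrit : ∀ z : ℂ, f z ∈ (fun t : ℝ => α + (t : ℂ) * (β - α)) '' Set.Icc (0:ℝ) 1 →
      deriv f z ≠ 0)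
    (z₁ z₂ : ℂ) (hz : z₁ ≠ z₂) (h₁ : f z₁ = α) (h₂ : f z₂ = α)
    (γ₁ γ₂ : ℝ → ℂ)
    (hγ₁c : ContinuousOn γ₁ (Set.Icc 0 1)) (hγ₂c : ContinuousOn γ₂ (Set.Icc 0 1))
    (hlift₁ : ∀ t ∈ Set.Icc (0:ℝ) 1, f (γ₁ t) = α + (t : ℂ) * (β - α))
    (hlift₂ : ∀ t ∈ Set.Icc (0:ℝ) 1, f (γ₂ t) = α + (t : ℂ) * (β - α))
    (h0₁ : γ₁ 0 = z₁) (h0₂ : γ₂ 0 = z₂) :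
    (γ₁ '' Set.Icc (0:ℝ) 1) ∩ (γ₂ '' Set.Icc (0:ℝ) 1) = ∅ :=
  segment_lifts_disjoint_general α β hab f hf hcrit z₁ z₂ hz γ₁ γ₂ hγ₁c hγ₂c hlift₁ hlift₂ h0₁ h0₂
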